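/- Let K ⊆ ℂ be a number field closed under complex conjugation, and let λ₁, λ₂, λ₃, λ₄ ∈ K^× satisfy: (i) |λ₁|_v = |λ₂|_v = |λ₃|_v = |λ₄|_v for every archimedean place v of K; (ii) for every finite place v of K, three of the four numbers |λ₁|_v, …, |λ₄|_v are equal and the fourth is ≤ the common value (the choice of which three may depend on v). Then all quotients λⱼ/λₖ (1 ≤ j, k ≤ 4) are roots of unity. -/

import Mathlib

open NumberField IsDedekindDomain
open scoped Classical

/-- The order (additive valuation) of `x ∈ K` at a finite place `v`. -/
noncomputable def ordAt {K : Type*} [Field K] [NumberField K]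
    (v : HeightOneSpectrum (𝓞 K)) (x : K) : ℤ :=
  if hx : x = 0 then 0
  else - Multiplicative.toAdd (WithZero.unzero ((v.valuation (K := K)).ne_zero_iff.mpr hx))

/-- The residue characteristic of the finite place `v`, i.e. the underlying rational
prime `p`. -/
noncomputable def resChar {K : Type*} [Field K] [NumberField K]
    (v : HeightOneSpectrum (𝓞 K)) : ℕ := ringChar ((𝓞 K) ⧸ v.asIdeal)

/-- The ramification index `e` of the finite place `v` over its residue characteristic. -/
noncomputable def ramIdx {K : Type*} [Field K] [NumberField K]
    (v : HeightOneSpectrum (𝓞 K)) : ℕ :=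
  Ideal.ramificationIdx' (Ideal.span {(resChar v : ℤ)}) v.asIdeal

/-- The inertia degree `f` of the finite place `v` over its residue characteristic. -/
noncomputable def inertia {K : Type*} [Field K] [NumberField K]
    (v : HeightOneSpectrum (𝓞 K)) : ℕ :=
  Ideal.inertiaDeg' (Ideal.span {(resChar v : ℤ)}) v.asIdeal

/-- The local degree `d_v = e_v · f_v` of the finite place `v`. -/
noncomputable def localDeg {K : Type*} [Field K] [NumberField K]
    (v : HeightOneSpectrum (𝓞 K)) : ℕ := ramIdx v * inertia v

/-- The normalized `v`-adic absolute value `|x|_v = p^{-ord_v(x)/e}`, extending the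
standard `p`-adic absolute value of `ℚ`. -/
noncomputable def finAbs {K : Type*} [Field K] [NumberField K]
    (v : HeightOneSpectrum (𝓞 K)) (x : K) : ℝ :=
  if x = 0 then 0 else (resChar v : ℝ) ^ (-(ordAt v x : ℝ) / (ramIdx v : ℝ))

/-- The absolute logarithmic Weil height of `x ∈ K`:
`h(x) = (1/d) Σ_{v ∈ M_K} d_v log max{1, |x|_v}`, the sum running over the (normalized)
finite and infinite places of `K`. -/
noncomputable def heightK {K : Type*} [Field K] [NumberField K] (x : K) : ℝ :=
  ((∑ᶠ v : HeightOneSpectrum (𝓞 K), (localDeg v : ℝ) * Real.log (max 1 (finAbs v x))) +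
    ∑ w : InfinitePlace K, (w.mult : ℝ) * Real.log (max 1 (w x))) /
    (Module.finrank ℚ K : ℝ)

set_option synthInstance.maxHeartbeats 1000000

section Aux

open IsDedekindDomain.HeightOneSpectrum Multiplicative

variable {K : Type*} [Field K] [NumberField K]

lemma wz_inj {a b : ℤ}
    (h : ((ofAdd (-a) : Multiplicative ℤ) : WithZero (Multiplicative ℤ)) = ofAdd (-b)) :
    a = b :=
  neg_inj.mp (ofAdd.injective (WithZero.coe_inj.mp h))

lemma ordAt_spec (v : HeightOneSpectrum (𝓞 K)) {x : K} (hx : x ≠ 0) :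
    v.valuation K x = ((ofAdd (-(ordAt v x)) : Multiplicative ℤ) : WithZero (Multiplicative ℤ)) := by
  rw [ordAt, dif_neg hx, neg_neg, ofAdd_toAdd, WithZero.coe_unzero]

lemma ordAt_eq_iff (v : HeightOneSpectrum (𝓞 K)) {x y : K} (hx : x ≠ 0) (hy : y ≠ 0) :
    ordAt v x = ordAt v y ↔ v.valuation K x = v.valuation K y := by
  constructor
  · intro h; rw [ordAt_spec v hx, ordAt_spec v hy, h]
  · intro h
    exact wz_inj ((ordAt_spec v hx).symm.trans (h.trans (ordAt_spec v hy)))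

lemma ordAt_mul (v : HeightOneSpectrum (𝓞 K)) {x y : K} (hx : x ≠ 0) (hy : y ≠ 0) :
    ordAt v (x * y) = ordAt v x + ordAt v y := by
  have h := (v.valuation (K := K)).map_mul x y
  rw [ordAt_spec v (mul_ne_zero hx hy), ordAt_spec v hx, ordAt_spec v hy,
    ← WithZero.coe_mul, ← ofAdd_add, ← neg_add] at h
  exact wz_inj h

lemma resChar_prime (v : HeightOneSpectrum (𝓞 K)) : (resChar v).Prime := by
  haveI : v.asIdeal.IsMaximal := v.isPrime.isMaximal v.ne_bot
  haveI : Finite ((𝓞 K) ⧸ v.asIdeal) := Ideal.finiteQuotientOfFreeOfNeBot _ v.ne_bot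
  haveI : CharP ((𝓞 K) ⧸ v.asIdeal) (resChar v) := by
    unfold resChar; exact ringChar.charP ((𝓞 K) ⧸ v.asIdeal)
  exact CharP.char_is_prime ((𝓞 K) ⧸ v.asIdeal) (resChar v)

lemma resChar_mem (v : HeightOneSpectrum (𝓞 K)) :
    ((resChar v : ℕ) : 𝓞 K) ∈ v.asIdeal := by
  haveI : CharP ((𝓞 K) ⧸ v.asIdeal) (resChar v) := by
    unfold resChar; exact ringChar.charP ((𝓞 K) ⧸ v.asIdeal)
  have h0 : ((resChar v : ℕ) : (𝓞 K) ⧸ v.asIdeal) = 0 := CharP.cast_eq_zero _ _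
  have : Ideal.Quotient.mk v.asIdeal ((resChar v : ℕ) : 𝓞 K) = 0 := by
    rw [map_natCast]; exact h0
  exact Ideal.Quotient.eq_zero_iff_mem.mp this

lemma ramIdx_pos (v : HeightOneSpectrum (𝓞 K)) : 0 < ramIdx v := by
  rw [Nat.pos_iff_ne_zero]
  apply Ideal.IsDedekindDomain.ramificationIdx_ne_zero
  · rw [Ideal.map_span, Set.image_singleton, Ne, Ideal.span_singleton_eq_bot]
    intro h
    have hinj : Function.Injective (algebraMap ℤ (𝓞 K)) :=
      fun a b hab => by
        have := congrArg (algebraMap (𝓞 K) K) hab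
        rw [← IsScalarTower.algebraMap_apply, ← IsScalarTower.algebraMap_apply] at this
        exact (algebraMap ℤ K).injective_int this
    rw [← map_zero (algebraMap ℤ (𝓞 K))] at h
    have := hinj h
    exact (resChar_prime v).ne_zero (by exact_mod_cast this)
  · exact v.isPrime
  · rw [Ideal.map_span, Set.image_singleton, Ideal.span_le, Set.singleton_subset_iff]
    have : algebraMap ℤ (𝓞 K) ((resChar v : ℕ) : ℤ) = ((resChar v : ℕ) : 𝓞 K) := by
      simp
    rw [this]
    exact resChar_mem v

lemma finAbs_le_iff (v : HeightOneSpectrum (𝓞 K)) {x y : K} (hx : x ≠ 0) (hy : y ≠ 0) :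
    finAbs v x ≤ finAbs v y ↔ ordAt v y ≤ ordAt v x := by
  have hp : (1 : ℝ) < (resChar v : ℝ) := by exact_mod_cast (resChar_prime v).one_lt
  have he : (0 : ℝ) < (ramIdx v : ℝ) := by exact_mod_cast ramIdx_pos v
  rw [finAbs, if_neg hx, finAbs, if_neg hy, Real.rpow_le_rpow_left_iff hp,
    div_le_div_iff_of_pos_right he, neg_le_neg_iff, Int.cast_le]

lemma finAbs_eq_iff (v : HeightOneSpectrum (𝓞 K)) {x y : K} (hx : x ≠ 0) (hy : y ≠ 0) :
    finAbs v x = finAbs v y ↔ ordAt v x = ordAt v y := by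
  rw [le_antisymm_iff, le_antisymm_iff, finAbs_le_iff v hx hy, finAbs_le_iff v hy hx, and_comm]

end Aux

section Conj

open IsDedekindDomain.HeightOneSpectrum Multiplicative

variable (K : Subfield ℂ) (hconj : ∀ x : ℂ, x ∈ K → (starRingEnd ℂ) x ∈ K)

/-- Complex conjugation as a ring automorphism of `K`. -/
def conjAut : K ≃+* K where
  toFun x := ⟨(starRingEnd ℂ) x, hconj x x.2⟩
  invFun x := ⟨(starRingEnd ℂ) x, hconj x x.2⟩
  left_inv x := Subtype.ext (Complex.conj_conj (x : ℂ))
  right_inv x := Subtype.ext (Complex.conj_conj (x : ℂ))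
  map_mul' x y := Subtype.ext (by push_cast; exact map_mul _ _ _)
  map_add' x y := Subtype.ext (by push_cast; exact map_add _ _ _)

@[simp] lemma conjAut_apply (x : K) :
    (conjAut K hconj x : ℂ) = (starRingEnd ℂ) (x : ℂ) := rfl

variable [NumberField K]

/-- Conjugation on the ring of integers. -/
noncomputable def conjO : (𝓞 K) ≃+* (𝓞 K) :=
  RingOfIntegers.mapRingEquiv (conjAut K hconj)

lemma conjO_coe (a : 𝓞 K) :
    (algebraMap (𝓞 K) K) ((conjO K hconj) a) = conjAut K hconj ((algebraMap (𝓞 K) K) a) := rfl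

/-- The conjugate finite place. -/
noncomputable def conjPlace (v : HeightOneSpectrum (𝓞 K)) : HeightOneSpectrum (𝓞 K) where
  asIdeal := Ideal.comap (conjO K hconj) v.asIdeal
  isPrime := Ideal.IsPrime.comap _
  ne_bot := by
    intro h
    apply v.ne_bot
    have h2 := Ideal.map_comap_of_surjective ((conjO K hconj : (𝓞 K) →+* (𝓞 K)))
      (conjO K hconj).surjective v.asIdeal
    rw [show (Ideal.comap ((conjO K hconj : (𝓞 K) →+* (𝓞 K))) v.asIdeal) = ⊥ from h,
      Ideal.map_bot] at h2
    exact h2.symm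

lemma conj_dvd_iff (v : HeightOneSpectrum (𝓞 K)) (n : ℕ) (r : 𝓞 K) :
    (conjPlace K hconj v).asIdeal ^ n ∣ Ideal.span {r} ↔
      v.asIdeal ^ n ∣ Ideal.span {(conjO K hconj) r} := by
  have hpow : (conjPlace K hconj v).asIdeal ^ n = Ideal.comap (conjO K hconj) (v.asIdeal ^ n) := by
    show (Ideal.comap (conjO K hconj) v.asIdeal) ^ n = _
    rw [← Ideal.map_symm, ← Ideal.map_symm, Ideal.map_pow]
  rw [Ideal.dvd_iff_le, Ideal.dvd_iff_le, hpow, Ideal.span_le, Ideal.span_le,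
    Set.singleton_subset_iff, Set.singleton_subset_iff, SetLike.mem_coe, SetLike.mem_coe,
    Ideal.mem_comap]

lemma conj_intVal (v : HeightOneSpectrum (𝓞 K)) (r : 𝓞 K) :
    (conjPlace K hconj v).intValuationDef r = v.intValuationDef ((conjO K hconj) r) := by
  by_cases hr : r = 0
  · rw [hr, map_zero, intValuationDef_zero, intValuationDef_zero]
  · have hsr : (conjO K hconj) r ≠ 0 := fun h => hr (by
      have := congrArg (conjO K hconj).symm h
      rwa [RingEquiv.symm_apply_apply, map_zero] at this)
    apply le_antisymm
    · rw [v.intValuationDef_if_neg hsr, ← intValuation_apply, intValuation_le_pow_iff_dvd, conj_dvd_iff,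
        ← intValuation_le_pow_iff_dvd, v.intValuation_if_neg hsr]
    · rw [(conjPlace K hconj v).intValuationDef_if_neg hr, ← intValuation_apply, intValuation_le_pow_iff_dvd,
        ← conj_dvd_iff, ← intValuation_le_pow_iff_dvd,
        (conjPlace K hconj v).intValuation_if_neg hr]

lemma conj_valuation (v : HeightOneSpectrum (𝓞 K)) (x : K) :
    (conjPlace K hconj v).valuation K x = v.valuation K (conjAut K hconj x) := by
  obtain ⟨a, b, hb, rfl⟩ := IsFractionRing.div_surjective (A := 𝓞 K) x
  rw [map_div₀, map_div₀, map_div₀, ← conjO_coe, ← conjO_coe,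
    valuation_of_algebraMap, valuation_of_algebraMap, valuation_of_algebraMap,
    valuation_of_algebraMap, intValuation_apply, intValuation_apply, intValuation_apply,
    intValuation_apply, conj_intVal, conj_intVal]

lemma conj_ordAt (v : HeightOneSpectrum (𝓞 K)) {x : K} (hx : x ≠ 0) :
    ordAt (conjPlace K hconj v) x = ordAt v (conjAut K hconj x) := by
  have hsx : conjAut K hconj x ≠ 0 := fun h => hx (by
    have := congrArg (conjAut K hconj).symm h
    rwa [RingEquiv.symm_apply_apply, map_zero] at this)
  have h := conj_valuation K hconj v x
  rw [ordAt_spec _ hx, ordAt_spec _ hsx] at h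
  exact wz_inj h

end Conj

lemma comb_lemma {a b : Fin 4 → ℤ} (hsum : ∀ i i', a i + b i = a i' + b i')
    (ha : ∃ j, (∀ k, k ≠ j → ∀ l, l ≠ j → a k = a l) ∧ ∀ k, k ≠ j → a k ≤ a j)
    (hb : ∃ j, (∀ k, k ≠ j → ∀ l, l ≠ j → b k = b l) ∧ ∀ k, k ≠ j → b k ≤ b j) :
    ∀ i i', a i = a i' := by
  obtain ⟨j₀, ha1, ha2⟩ := ha
  obtain ⟨j₁, hb1, hb2⟩ := hb
  have hkey : ∀ k, k ≠ j₀ → a k = a j₀ := by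
    intro k hk
    by_cases hj : j₁ = j₀
    · subst hj
      have h1 := ha2 k hk
      have h2 := hb2 k hk
      have h3 := hsum k j₁
      omega
    · have hgen : ∀ p q : Fin 4, ∃ m : Fin 4, m ≠ p ∧ m ≠ q := by decide
      obtain ⟨m, hm0, hm1⟩ := hgen j₀ j₁
      have hbm : b j₀ = b m := hb1 j₀ (fun h => hj h.symm) m hm1
      have h3 := hsum j₀ m
      have h4 : a j₀ = a m := by omega
      have h5 : a k = a m := ha1 k hk m hm0
      omega
  intro i i'
  by_cases hi : i = j₀ <;> by_cases hi' : i' = j₀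
  · rw [hi, hi']
  · rw [hi, (hkey i' hi')]
  · rw [hi', (hkey i hi)]
  · rw [hkey i hi, hkey i' hi']

/-- **Bacik's lemma (contrapositive form).** Let `K ⊆ ℂ` be a number field closed under
complex conjugation and `λ₁, λ₂, λ₃, λ₄ ∈ K^×` such that (i) all archimedean places of
`K` agree on the four numbers, and (ii) at every finite place three of the four absolute
values are equal and the fourth is at most the common value. Then all quotients
`λⱼ/λₖ` are roots of unity. -/
theorem bacik_lemma (K : Subfield ℂ) [NumberField K]
    (hconj : ∀ x : ℂ, x ∈ K → (starRingEnd ℂ) x ∈ K)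
    (lam : Fin 4 → K) (hlam : ∀ j, lam j ≠ 0)
    (harch : ∀ w : InfinitePlace K, ∀ j k, w (lam j) = w (lam k))
    (hfin : ∀ v : HeightOneSpectrum (𝓞 K), ∃ j : Fin 4,
      (∀ k, k ≠ j → ∀ l, l ≠ j → finAbs v (lam k) = finAbs v (lam l)) ∧
        ∀ k, k ≠ j → finAbs v (lam j) ≤ finAbs v (lam k)) :
    ∀ j k, ∃ n : ℕ, 0 < n ∧ (lam j / lam k) ^ n = 1 := by
  intro j k
  -- all complex absolute values agree
  have habs : ∀ i i' : Fin 4, ‖((lam i : K) : ℂ)‖ = ‖((lam i' : K) : ℂ)‖ := by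
    intro i i'
    exact harch (NumberField.InfinitePlace.mk K.subtype) i i'
  -- the numbers λᵢ · conj(λᵢ) all agree
  have hmu : ∀ i i' : Fin 4,
      lam i * conjAut K hconj (lam i) = lam i' * conjAut K hconj (lam i') := by
    intro i i'
    apply Subtype.ext
    push_cast
    rw [conjAut_apply, conjAut_apply, Complex.mul_conj, Complex.mul_conj]
    norm_cast
    rw [← Complex.sq_norm, ← Complex.sq_norm, habs i i']
  have hσ0 : ∀ i : Fin 4, conjAut K hconj (lam i) ≠ 0 := fun i h =>
    hlam i ((map_eq_zero_iff _ (conjAut K hconj).injective).mp h)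
  -- all finite places agree on the λᵢ
  have hordeq : ∀ v : HeightOneSpectrum (𝓞 K), ∀ i i', ordAt v (lam i) = ordAt v (lam i') := by
    intro v
    apply comb_lemma (a := fun i => ordAt v (lam i))
      (b := fun i => ordAt v (conjAut K hconj (lam i)))
    · intro i i'
      have h1 : ordAt v (lam i * conjAut K hconj (lam i))
          = ordAt v (lam i' * conjAut K hconj (lam i')) := by rw [hmu i i']
      rwa [ordAt_mul v (hlam i) (hσ0 i), ordAt_mul v (hlam i') (hσ0 i')] at h1
    · obtain ⟨j₀, h1, h2⟩ := hfin v
      exact ⟨j₀, fun p hp q hq => (finAbs_eq_iff v (hlam p) (hlam q)).mp (h1 p hp q hq),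
        fun p hp => (finAbs_le_iff v (hlam j₀) (hlam p)).mp (h2 p hp)⟩
    · obtain ⟨j₁, h1, h2⟩ := hfin (conjPlace K hconj v)
      refine ⟨j₁, ?_, ?_⟩
      · intro p hp q hq
        have h3 := (finAbs_eq_iff _ (hlam p) (hlam q)).mp (h1 p hp q hq)
        rwa [conj_ordAt K hconj v (hlam p), conj_ordAt K hconj v (hlam q)] at h3
      · intro p hp
        have h3 := (finAbs_le_iff _ (hlam j₁) (hlam p)).mp (h2 p hp)
        rwa [conj_ordAt K hconj v (hlam j₁), conj_ordAt K hconj v (hlam p)] at h3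
  -- valuation of the quotient is 1 at all finite places
  have hval1 : ∀ v : HeightOneSpectrum (𝓞 K), v.valuation K ((lam j / lam k : K)) = 1 := by
    intro v
    rw [map_div₀, (ordAt_eq_iff v (hlam j) (hlam k)).mp (hordeq v j k)]
    exact div_self ((Valuation.ne_zero_iff _).mpr (hlam k))
  have hx0 : lam j / lam k ≠ 0 := div_ne_zero (hlam j) (hlam k)
  -- write the quotient as a ratio of integers and show it is a unit
  obtain ⟨a, b, hb, hxeq⟩ := IsFractionRing.div_surjective (A := 𝓞 K) ((lam j / lam k : K))
  have hb0 : b ≠ 0 := nonZeroDivisors.ne_zero hb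
  have hbK : algebraMap (𝓞 K) K b ≠ 0 :=
    IsFractionRing.to_map_ne_zero_of_mem_nonZeroDivisors hb
  have ha0 : a ≠ 0 := by
    intro h; rw [h, map_zero, zero_div] at hxeq; exact hx0 hxeq.symm
  have haK : algebraMap (𝓞 K) K a ≠ 0 := by
    rwa [Ne, map_eq_zero_iff _ (IsFractionRing.injective (𝓞 K) K)]
  have hint : ∀ v : HeightOneSpectrum (𝓞 K), v.intValuationDef a = v.intValuationDef b := by
    intro v
    have h1 : algebraMap (𝓞 K) K a = (lam j / lam k) * algebraMap (𝓞 K) K b := by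
      rw [← hxeq]; exact (div_mul_cancel₀ _ hbK).symm
    have h2 : v.valuation K (algebraMap (𝓞 K) K a)
        = v.valuation K ((lam j / lam k : K) * algebraMap (𝓞 K) K b) := by rw [← h1]
    rwa [Valuation.map_mul, hval1 v, one_mul,
      IsDedekindDomain.HeightOneSpectrum.valuation_of_algebraMap,
      IsDedekindDomain.HeightOneSpectrum.valuation_of_algebraMap,
      IsDedekindDomain.HeightOneSpectrum.intValuation_apply,
      IsDedekindDomain.HeightOneSpectrum.intValuation_apply] at h2
  have hspan_a : Ideal.span {a} ≠ (0 : Ideal (𝓞 K)) := by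
    rw [Ideal.zero_eq_bot, Ne, Ideal.span_singleton_eq_bot]; exact ha0
  have hspan_b : Ideal.span {b} ≠ (0 : Ideal (𝓞 K)) := by
    rw [Ideal.zero_eq_bot, Ne, Ideal.span_singleton_eq_bot]; exact hb0
  have hmk : Associates.mk (Ideal.span {a}) = Associates.mk (Ideal.span {b}) := by
    apply Associates.eq_of_eq_counts (Associates.mk_ne_zero.mpr hspan_a)
      (Associates.mk_ne_zero.mpr hspan_b)
    intro p hp
    obtain ⟨I, rfl⟩ := Associates.mk_surjective p
    have hI : Irreducible I := Associates.irreducible_mk.mp hp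
    have hI0 : I ≠ ⊥ := by simpa using hI.ne_zero
    have hIp : I.IsPrime := Ideal.isPrime_of_prime
      (UniqueFactorizationMonoid.irreducible_iff_prime.mp hI)
    have h := hint ⟨I, hIp, hI0⟩
    rw [IsDedekindDomain.HeightOneSpectrum.intValuationDef_if_neg _ ha0,
      IsDedekindDomain.HeightOneSpectrum.intValuationDef_if_neg _ hb0] at h
    exact_mod_cast wz_inj h
  have hspan : Ideal.span {a} = Ideal.span {b} :=
    associated_iff_eq.mp (Associates.mk_eq_mk_iff_associated.mp hmk)
  obtain ⟨u, hu⟩ := Ideal.span_singleton_eq_span_singleton.mp hspan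
  have huK : algebraMap (𝓞 K) K (u : 𝓞 K) ≠ 0 := by
    rw [Ne, map_eq_zero_iff _ (IsFractionRing.injective (𝓞 K) K)]
    exact u.ne_zero
  have hu1 : algebraMap (𝓞 K) K (u : 𝓞 K) * algebraMap (𝓞 K) K ((u⁻¹ : (𝓞 K)ˣ) : 𝓞 K) = 1 := by
    rw [← map_mul, Units.mul_inv, map_one]
  have hxu : lam j / lam k = algebraMap (𝓞 K) K ((u⁻¹ : (𝓞 K)ˣ) : 𝓞 K) := by
    rw [← hxeq, ← hu, map_mul, div_eq_iff (mul_ne_zero haK huK)]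
    linear_combination (-(algebraMap (𝓞 K) K a)) * hu1
  have hxi : IsIntegral ℤ ((lam j / lam k : K)) := by
    rw [hxu]; exact RingOfIntegers.isIntegral_coe _
  have harch' : ∀ φ : (↥K) →+* ℂ, ‖φ ((lam j / lam k : K))‖ = 1 := by
    intro φ
    have h := harch (NumberField.InfinitePlace.mk φ) j k
    rw [NumberField.InfinitePlace.apply, NumberField.InfinitePlace.apply] at h
    have hk0 : ‖φ (lam k)‖ ≠ 0 := by
      simp only [ne_eq, norm_eq_zero, map_eq_zero]
      exact hlam k
    rw [map_div₀, norm_div, h]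
    exact div_self hk0
  obtain ⟨n, hn, hp⟩ :=
    NumberField.Embeddings.pow_eq_one_of_norm_eq_one (K := ↥K) (A := ℂ) hxi harch'
  exact ⟨n, hn, hp⟩
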